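/- Mean hitting time tree formula: for a Markov chain X on finite S with w(R) > 0 and i ∈ S \ R, E_i[T_R] = ( Σ_{j ∈ S\R} w_{ij}(R ∪ {j}) ) / w(R). -/

import Mathlib

open Finset

/-- A spanning forest of `S` with root set `R`, encoded as a successor function:
roots are fixed points, and every state eventually reaches `R` under iteration. -/
def IsForest {S : Type*} [Fintype S] [DecidableEq S] (R : Finset S) (f : S → S) : Prop :=
  (∀ i ∈ R, f i = i) ∧ ∀ i : S, ∃ n : ℕ, f^[n] i ∈ R

/-- The `P`-weight of a forest: product of transition probabilities over its directed edges. -/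
noncomputable def forestWt {S : Type*} [Fintype S] [DecidableEq S]
    (p : S → S → ℝ) (R : Finset S) (f : S → S) : ℝ :=
  ∏ i ∈ Rᶜ, p i (f i)

open Classical in
/-- `w p R`: the total `P`-weight of spanning forests with root set `R`. -/
noncomputable def w {S : Type*} [Fintype S] [DecidableEq S]
    (p : S → S → ℝ) (R : Finset S) : ℝ :=
  ∑ f : S → S, if IsForest R f then forestWt p R f else 0

open Classical in
/-- `wroot p A i j`: total weight of forests with root set `A` in which the tree
containing `i` has root `j`. -/
noncomputable def wroot {S : Type*} [Fintype S] [DecidableEq S]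
    (p : S → S → ℝ) (A : Finset S) (i j : S) : ℝ :=
  ∑ f : S → S, if IsForest A f ∧ ∃ n : ℕ, f^[n] i = j then forestWt p A f else 0

/-- `p` is a stochastic matrix. -/
def IsStochastic {S : Type*} [Fintype S] (p : S → S → ℝ) : Prop :=
  (∀ i j, 0 ≤ p i j) ∧ ∀ i, ∑ j, p i j = 1

/-- `p` is irreducible. -/
def PIrreducible {S : Type*} [Fintype S] [DecidableEq S] (p : S → S → ℝ) : Prop :=
  ∀ i j : S, ∃ n : ℕ, 0 < ((Matrix.of p) ^ n) i j

/-- Weight of a path starting at `i` with successive states given by the list. -/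
def wt {S : Type*} (p : S → S → ℝ) : S → List S → ℝ
  | _, [] => 1
  | i, j :: l => p i j * wt p j l

/-- Mean hitting time of `R` starting from `i`, `E_i[T_R] = ∑_{n≥0} P_i(T_R > n)`, expressed
as the sum of weights of all finite paths from `i` staying outside `R`. -/
noncomputable def meanHit {S : Type*} [Fintype S] [DecidableEq S]
    (p : S → S → ℝ) (R : Finset S) (i : S) : ℝ :=
  ∑' l : {l : List S // ∀ x ∈ l, x ∉ R}, wt p i l.1

/-!
Let `g x = ∑_{j ∉ R} w_{xj}(R ∪ {j})`. A first-step analysis on forests gives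
`g = w(R) + P g` off `R`, after pairing each forest with one extra edge `x ↦ k` of weight
`p x k` (these weights sum to one). For `j ≠ x`, exchanging that edge with the edge leaving `x`
is a weight-preserving involution, which shows that `x ↦ w_{xj}(R ∪ {j})` is harmonic off
`R ∪ {j}`. For `j = x`, re-rooting at `j` turns the pairs whose extra edge closes no cycle into the
forests rooted at `R`.

So `g / w(R)` is a nonnegative solution of `h = 1 + P h` off `R`. Such a solution dominates the
partial sums of `n ↦ P_x(T_R > n)`, which are therefore summable and tend to zero; the latter
makes the difference of two such solutions, which is harmonic off `R`, vanish.
-/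

namespace Function

variable {S : Type*}

def Reaches (f : S → S) (x y : S) : Prop := ∃ n, f^[n] x = y

theorem Reaches.refl (f : S → S) (x : S) : Reaches f x x := ⟨0, rfl⟩

theorem Reaches.trans {f : S → S} {x y z : S} (hxy : Reaches f x y) (hyz : Reaches f y z) :
    Reaches f x z := by
  obtain ⟨m, rfl⟩ := hxy
  obtain ⟨n, rfl⟩ := hyz
  exact ⟨n + m, iterate_add_apply f n m x⟩

theorem reaches_apply_iff {f : S → S} {x y : S} (hxy : x ≠ y) :
    Reaches f (f x) y ↔ Reaches f x y := by
  refine ⟨fun ⟨n, hn⟩ => ⟨n + 1, by rwa [iterate_succ_apply]⟩, fun ⟨n, hn⟩ => ?_⟩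
  cases n with
  | zero => exact absurd hn hxy
  | succ n => exact ⟨n, by rwa [← iterate_succ_apply]⟩

theorem Reaches.of_reaches_of_isFixedPt {f : S → S} {x y z : S} (hxy : Reaches f x y)
    (hxz : Reaches f x z) (hz : IsFixedPt f z) (hyz : y ≠ z) : Reaches f y z := by
  obtain ⟨m, rfl⟩ := hxy
  obtain ⟨n, rfl⟩ := hxz
  refine ⟨n - m, ?_⟩
  rcases le_or_gt m n with hmn | hnm
  · rw [← iterate_add_apply, Nat.sub_add_cancel hmn]
  · refine absurd ?_ hyz
    rw [← Nat.sub_add_cancel hnm.le, iterate_add_apply, hz.iterate]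

theorem iterate_update_eq_or_reaches [DecidableEq S] (f : S → S) (a b x : S) (n : ℕ) :
    (update f a b)^[n] x = f^[n] x ∨ Reaches f x a := by
  induction n with
  | zero => exact Or.inl rfl
  | succ n ih =>
    refine ih.elim (fun h => ?_) Or.inr
    by_cases hn : f^[n] x = a
    · exact Or.inr ⟨n, hn⟩
    · left
      rw [iterate_succ_apply', iterate_succ_apply', h, update_of_ne hn]

theorem iterate_update_of_not_reaches [DecidableEq S] {f : S → S} {a x : S}
    (h : ¬ Reaches f x a) (b : S) (n : ℕ) : (update f a b)^[n] x = f^[n] x :=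
  (iterate_update_eq_or_reaches f a b x n).resolve_right h

theorem reaches_update_iff_of_not_reaches [DecidableEq S] {f : S → S} {a x : S}
    (h : ¬ Reaches f x a) (b y : S) : Reaches (update f a b) x y ↔ Reaches f x y := by
  simp only [Reaches, iterate_update_of_not_reaches h]

theorem reaches_of_reaches_update [DecidableEq S] {f : S → S} {a b x : S}
    (h : Reaches (update f a b) x a) : Reaches f x a := by
  obtain ⟨n, hn⟩ := h
  exact (iterate_update_eq_or_reaches f a b x n).elim (fun h => ⟨n, h ▸ hn⟩) id

theorem reaches_update_self_iff [DecidableEq S] (f : S → S) (a b x : S) :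
    Reaches (update f a b) x a ↔ Reaches f x a :=
  ⟨reaches_of_reaches_update, fun h =>
    reaches_of_reaches_update (b := f a) (by rwa [update_idem, update_eq_self])⟩

end Function

open Function

section Forest

variable {S : Type*} [Fintype S] [DecidableEq S] {A R : Finset S} {f : S → S}

theorem IsForest.update_self (hf : IsForest A f) (a : S) :
    IsForest (insert a A) (update f a a) := by
  refine ⟨fun x hx => ?_, fun x => ?_⟩
  · by_cases hxa : x = a
    · rw [hxa, Function.update_self]
    · rw [update_of_ne hxa]
      exact hf.1 x ((mem_insert.1 hx).resolve_left hxa)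
  · by_cases hxa : Reaches f x a
    · obtain ⟨n, hn⟩ := (reaches_update_self_iff f a a x).2 hxa
      exact ⟨n, by rw [hn]; exact mem_insert_self a A⟩
    · obtain ⟨n, hn⟩ := hf.2 x
      exact ⟨n, by rw [iterate_update_of_not_reaches hxa]; exact mem_insert_of_mem hn⟩

theorem IsForest.not_reaches_self (hf : IsForest A f) {x : S} (hx : x ∉ A) :
    ¬ Reaches f (f x) x := by
  rintro ⟨n, hn⟩
  have hper : IsPeriodicPt f (n + 1) x := by rwa [IsPeriodicPt, IsFixedPt, iterate_succ_apply]
  obtain ⟨m, hm⟩ := hf.2 x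
  have hstable : f^[(n + 1) * m] x = f^[m] x := by
    rw [← Nat.sub_add_cancel (Nat.le_mul_of_pos_left m n.succ_pos), iterate_add_apply,
      iterate_fixed (hf.1 _ hm)]
  have hxm : x = f^[m] x := (hper.mul_const m).eq.symm.trans hstable
  exact hx (hxm ▸ hm)

theorem IsForest.update_of_not_reaches {j k : S} (hj : j ∉ R) (hf : IsForest (insert j R) f)
    (hk : ¬ Reaches f k j) : IsForest R (update f j k) := by
  have avoiding : ∀ x, ¬ Reaches f x j → ∃ n, (update f j k)^[n] x ∈ R := by
    intro x hx
    obtain ⟨n, hn⟩ := hf.2 x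
    refine ⟨n, ?_⟩
    rw [iterate_update_of_not_reaches hx]
    exact (mem_insert.1 hn).resolve_left fun h => hx ⟨n, h⟩
  refine ⟨fun r hr => ?_, fun x => ?_⟩
  · rw [update_of_ne (ne_of_mem_of_not_mem hr hj)]
    exact hf.1 r (mem_insert_of_mem hr)
  · by_cases hx : Reaches f x j
    · obtain ⟨m, hm⟩ := ((reaches_update_self_iff f j k x).2 hx).trans
        ⟨1, by rw [iterate_one, Function.update_self]⟩
      obtain ⟨n, hn⟩ := avoiding k hk
      exact ⟨n + m, by rwa [iterate_add_apply, hm]⟩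
    · exact avoiding x hx

theorem isForest_update_iff {j k : S} (hj : j ∉ R) (hfj : f j = j) :
    IsForest R (update f j k) ↔ IsForest (insert j R) f ∧ ¬ Reaches f k j := by
  refine ⟨fun h => ?_, fun h => h.1.update_of_not_reaches hj h.2⟩
  have hf : update (update f j k) j j = f := by rw [update_idem, update_eq_self_iff.2 hfj.symm]
  refine ⟨hf ▸ h.update_self j, fun hk => h.not_reaches_self hj ?_⟩
  rwa [Function.update_self, ← reaches_update_self_iff _ j j, hf]

theorem IsForest.rewire (hf : IsForest A f) {i k : S} (hi : i ∉ A) (hk : ¬ Reaches f k i) :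
    IsForest A (update f i k) := by
  simpa only [update_idem] using
    (hf.update_self i).update_of_not_reaches hi (by rwa [reaches_update_self_iff])

end Forest

section Weights

variable {S : Type*} [Fintype S] [DecidableEq S] (p : S → S → ℝ) {A R : Finset S}

theorem forestWt_update_insert {j : S} (hj : j ∉ R) (f : S → S) (k : S) :
    forestWt p R (update f j k) = p j k * forestWt p (insert j R) f := by
  rw [forestWt, forestWt, compl_insert, ← mul_prod_erase _ _ (mem_compl.2 hj),
    Function.update_self]
  congr 1
  exact prod_congr rfl fun x hx => by rw [update_of_ne (ne_of_mem_erase hx)]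

theorem mul_forestWt_update {i : S} (hi : i ∉ A) (f : S → S) (k : S) :
    p i k * forestWt p A f = p i (f i) * forestWt p A (update f i k) := by
  conv_lhs => rw [← update_eq_self i f]
  rw [forestWt_update_insert p hi, forestWt_update_insert p hi, mul_left_comm]

theorem forestWt_nonneg (hp : ∀ a b, 0 ≤ p a b) (R : Finset S) (f : S → S) :
    0 ≤ forestWt p R f :=
  prod_nonneg fun x _ => hp x (f x)

open Classical in
theorem w_eq_sum_filter (R : Finset S) :
    w p R = ∑ f ∈ univ.filter (IsForest R), forestWt p R f := by
  rw [w, sum_filter]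

open Classical in
theorem wroot_eq_sum_filter (A : Finset S) (i j : S) :
    wroot p A i j = ∑ f ∈ univ.filter (fun f => IsForest A f ∧ Reaches f i j), forestWt p A f := by
  rw [wroot, sum_filter]
  rfl

theorem wroot_nonneg (hp : ∀ a b, 0 ≤ p a b) (A : Finset S) (i j : S) : 0 ≤ wroot p A i j := by
  rw [wroot_eq_sum_filter]
  exact sum_nonneg fun f _ => forestWt_nonneg p hp A f

theorem wroot_self (A : Finset S) (j : S) : wroot p A j j = w p A := by
  classical
  rw [wroot_eq_sum_filter, w_eq_sum_filter]
  exact sum_congr (filter_congr fun f _ => and_iff_left (Reaches.refl f j)) fun _ _ => rfl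

theorem wroot_eq_zero_of_mem {i j : S} (hi : i ∈ A) (hij : i ≠ j) : wroot p A i j = 0 := by
  classical
  rw [wroot_eq_sum_filter]
  refine sum_eq_zero fun f hf => absurd ?_ hij
  obtain ⟨hforest, n, hn⟩ := (mem_filter.1 hf).2
  rwa [iterate_fixed (hforest.1 i hi)] at hn

end Weights

theorem sum_mul_sum_filter {α β M : Type*} [Fintype α] [Fintype β] [NonUnitalNonAssocSemiring M]
    (a : α → M) (b : β → M)
    (P : α → β → Prop) [∀ x y, Decidable (P x y)] :
    ∑ x, a x * ∑ y ∈ univ.filter (P x), b y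
      = ∑ q ∈ univ.filter (fun q : α × β => P q.1 q.2), a q.1 * b q.2 := by
  simp only [sum_filter, mul_sum, mul_ite, mul_zero, ← Fintype.sum_prod_type']

/-- Exchanges the edge leaving `i` with the extra edge `i ↦ k` carried along in the pair. -/
def swapEdge {S : Type*} [DecidableEq S] (i : S) (q : S × (S → S)) : S × (S → S) :=
  (q.2 i, update q.2 i q.1)

theorem swapEdge_swapEdge {S : Type*} [DecidableEq S] (i : S) (q : S × (S → S)) :
    swapEdge i (swapEdge i q) = q := by
  simp [swapEdge]

section FirstStep

variable {S : Type*} [Fintype S] [DecidableEq S] {p : S → S → ℝ} {A R : Finset S}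

open Classical in
theorem sum_mul_wroot_eq_sum_filter (i j : S) :
    ∑ k, p i k * wroot p A k j = ∑ q ∈ univ.filter
      (fun q : S × (S → S) => IsForest A q.2 ∧ Reaches q.2 q.1 j), p i q.1 * forestWt p A q.2 := by
  simp only [wroot_eq_sum_filter]
  exact sum_mul_sum_filter _ _ (fun k f => IsForest A f ∧ Reaches f k j)

theorem sum_forestWt_eq_sum_mul_forestWt {i : S} (hrow : ∑ k, p i k = 1) (P : (S → S) → Prop)
    [DecidablePred P] :
    ∑ f ∈ univ.filter P, forestWt p A f =
      ∑ q ∈ univ.filter (fun q : S × (S → S) => P q.2), p i q.1 * forestWt p A q.2 := by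
  rw [← sum_mul_sum_filter _ _ (fun _ f => P f), ← sum_mul, hrow, one_mul]

theorem wroot_eq_sum_mul_wroot {i j : S} (hrow : ∑ k, p i k = 1) (hi : i ∉ A) (hj : j ∈ A) :
    wroot p A i j = ∑ k, p i k * wroot p A k j := by
  classical
  have hij : i ≠ j := (ne_of_mem_of_not_mem hj hi).symm
  rw [wroot_eq_sum_filter p A i j, sum_forestWt_eq_sum_mul_forestWt hrow,
    sum_mul_wroot_eq_sum_filter, ← sum_filter_add_sum_filter_not _ (fun q => Reaches q.2 q.1 i),
    ← sum_filter_add_sum_filter_not (univ.filter _) (fun q => Reaches q.2 q.1 i)]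
  simp only [filter_filter]
  congr 1
  · refine sum_congr (filter_congr fun ⟨k, f⟩ _ => ⟨?_, ?_⟩) fun _ _ => rfl
    · rintro ⟨⟨hf, hreach⟩, hki⟩
      exact ⟨⟨hf, hki.trans hreach⟩, hki⟩
    · rintro ⟨⟨hf, hreach⟩, hki⟩
      exact ⟨⟨hf, hki.of_reaches_of_isFixedPt hreach (hf.1 j hj) hij⟩, hki⟩
  · -- pairs whose extra edge `i ↦ k` does not close a cycle are matched by `swapEdge i`
    have swap : ∀ k f, IsForest A f → ¬ Reaches f k i →
        IsForest A (update f i k) ∧ ¬ Reaches (update f i k) (f i) i ∧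
        (Reaches (update f i k) (f i) j ↔ Reaches f i j) ∧
        (Reaches (update f i k) i j ↔ Reaches f k j) := by
      intro k f hf hki
      have hfi := reaches_update_iff_of_not_reaches (hf.not_reaches_self hi) k
      refine ⟨hf.rewire hi hki, (hfi i).not.2 (hf.not_reaches_self hi),
        (hfi j).trans (reaches_apply_iff hij), ?_⟩
      rw [← reaches_apply_iff hij, Function.update_self,
        reaches_update_iff_of_not_reaches hki]
    refine sum_nbij' (swapEdge i) (swapEdge i) ?_ ?_ (fun q _ => swapEdge_swapEdge i q)
      (fun q _ => swapEdge_swapEdge i q) fun q _ => mul_forestWt_update p hi q.2 q.1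
    · rintro ⟨k, f⟩ hq
      simp only [mem_filter, mem_univ, true_and] at hq ⊢
      obtain ⟨hf', hii, hfj, -⟩ := swap k f hq.1.1 hq.2
      exact ⟨⟨hf', hfj.2 hq.1.2⟩, hii⟩
    · rintro ⟨k, f⟩ hq
      simp only [mem_filter, mem_univ, true_and] at hq ⊢
      obtain ⟨hf', hii, -, hkj⟩ := swap k f hq.1.1 hq.2
      exact ⟨⟨hf', hkj.2 hq.1.2⟩, hii⟩

theorem w_insert_eq {j : S} (hrow : ∑ k, p j k = 1) (hj : j ∉ R) :
    w p (insert j R) = w p R + ∑ k, p j k * wroot p (insert j R) k j := by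
  classical
  rw [w_eq_sum_filter p (insert j R), sum_forestWt_eq_sum_mul_forestWt hrow,
    sum_mul_wroot_eq_sum_filter, ← sum_filter_not_add_sum_filter _ (fun q => Reaches q.2 q.1 j),
    w_eq_sum_filter]
  simp only [filter_filter]
  congr 1
  refine sum_nbij' (fun q => update q.2 j q.1) (fun f => (f j, update f j j)) ?_ ?_ ?_ ?_ ?_
  · rintro ⟨k, f⟩ hq
    simp only [mem_filter, mem_univ, true_and] at hq ⊢
    exact (isForest_update_iff hj (hq.1.1 j (mem_insert_self j R))).2 hq
  · intro f hf
    simp only [mem_filter, mem_univ, true_and] at hf ⊢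
    exact (isForest_update_iff hj (Function.update_self j j f)).1
      (by rwa [update_idem, update_eq_self])
  · rintro ⟨k, f⟩ hq
    simp only [mem_filter, mem_univ, true_and] at hq
    simp only [Function.update_self, update_idem, update_eq_self_iff, Prod.mk.injEq, true_and]
    exact (hq.1.1 j (mem_insert_self j R)).symm
  · intro f _
    simp [update_idem]
  · rintro ⟨k, f⟩ _
    exact (forestWt_update_insert p hj f k).symm

theorem wroot_insert_eq {x j : S} (hrow : ∑ k, p x k = 1) (hj : j ∉ R) (hx : x ∉ R) :
    wroot p (insert j R) x j =
      (if x = j then w p R else 0) + ∑ k ∈ Rᶜ, p x k * wroot p (insert j R) k j := by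
  rw [sum_subset (subset_univ Rᶜ) fun k _ hk => by
    rw [wroot_eq_zero_of_mem p (mem_insert_of_mem (notMem_compl.1 hk))
      (ne_of_mem_of_not_mem (notMem_compl.1 hk) hj), mul_zero]]
  split_ifs with hxj
  · subst hxj
    rw [wroot_self, w_insert_eq hrow hj]
  · rw [zero_add]
    exact wroot_eq_sum_mul_wroot hrow (by simp [hxj, hx]) (mem_insert_self j R)

theorem sum_wroot_insert_eq {x : S} (hrow : ∑ k, p x k = 1) (hx : x ∉ R) :
    ∑ j ∈ Rᶜ, wroot p (insert j R) x j =
      w p R + ∑ k ∈ Rᶜ, p x k * ∑ j ∈ Rᶜ, wroot p (insert j R) k j := by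
  rw [sum_congr rfl fun j hj => wroot_insert_eq hrow (mem_compl.1 hj) hx, sum_add_distrib,
    sum_ite_eq Rᶜ x, if_pos (mem_compl.2 hx)]
  simp only [mul_sum]
  rw [sum_comm]

end FirstStep

open Filter Topology

theorem wt_nonneg {S : Type*} {p : S → S → ℝ} (hp : ∀ a b, 0 ≤ p a b) :
    ∀ (x : S) (l : List S), 0 ≤ wt p x l
  | _, [] => zero_le_one
  | x, j :: l => mul_nonneg (hp x j) (wt_nonneg hp j l)

section Survival

variable {S : Type*} [Fintype S] [DecidableEq S] {p : S → S → ℝ} {R : Finset S}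

/-- The weight of the paths `x = X₀, X₁, …, Xₙ` with `X₁, …, Xₙ ∉ R`; for a stochastic `p` and
`x ∉ R` this is `P_x(T_R > n)`. -/
noncomputable def survival (p : S → S → ℝ) (R : Finset S) : ℕ → S → ℝ
  | 0, _ => 1
  | n + 1, x => ∑ k ∈ Rᶜ, p x k * survival p R n k

theorem survival_nonneg (hp : ∀ a b, 0 ≤ p a b) : ∀ n x, 0 ≤ survival p R n x
  | 0, _ => zero_le_one
  | n + 1, x => sum_nonneg fun k _ => mul_nonneg (hp x k) (survival_nonneg hp n k)

theorem indicator_wt_cons (x a : S) (l : List S) :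
    {l : List S | ∀ y ∈ l, y ∉ R}.indicator (wt p x) (a :: l) =
      if a ∈ R then 0 else p x a * {l : List S | ∀ y ∈ l, y ∉ R}.indicator (wt p a) l := by
  by_cases ha : a ∈ R
  · simp [ha]
  · simp [ha, Set.indicator, wt]

theorem sum_indicator_wt_ofFn (n : ℕ) (x : S) :
    ∑ t : Fin n → S, {l : List S | ∀ y ∈ l, y ∉ R}.indicator (wt p x) (List.ofFn t) =
      survival p R n x := by
  induction n generalizing x with
  | zero => simp [survival, wt]
  | succ n ih =>
    have hcons : ∀ a (t : Fin n → S),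
        List.ofFn ((Fin.consEquiv fun _ => S) (a, t)) = a :: List.ofFn t := List.ofFn_cons
    rw [← (Fin.consEquiv fun _ => S).sum_comp, Fintype.sum_prod_type, survival,
      ← sum_compl_add_sum R, sum_eq_zero (s := R) fun a ha => sum_eq_zero fun t _ => by
        rw [hcons, indicator_wt_cons, if_pos ha], add_zero]
    refine sum_congr rfl fun a ha => ?_
    simp only [hcons, indicator_wt_cons, if_neg (mem_compl.1 ha), ← mul_sum, ih]

theorem meanHit_eq_tsum_survival (hp : ∀ a b, 0 ≤ p a b) {x : S}
    (hsum : Summable fun n => survival p R n x) : meanHit p R x = ∑' n, survival p R n x := by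
  set s : Set (List S) := {l | ∀ y ∈ l, y ∉ R}
  set F : (Σ n, Fin n → S) → ℝ := fun σ => s.indicator (wt p x) (List.ofFn σ.2)
  have hF : ∀ n, ∑' t : Fin n → S, F ⟨n, t⟩ = survival p R n x := fun n => by
    rw [tsum_fintype]
    exact sum_indicator_wt_ofFn n x
  have hFsum : Summable F :=
    (summable_sigma_of_nonneg fun σ => Set.indicator_nonneg (fun l _ => wt_nonneg hp x l) _).2
      ⟨fun n => .of_finite, hsum.congr fun n => (hF n).symm⟩
  calc meanHit p R x = ∑' l, s.indicator (wt p x) l := tsum_subtype s (wt p x)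
    _ = ∑' σ, F σ := (List.equivSigmaTuple.symm.tsum_eq (s.indicator (wt p x))).symm
    _ = ∑' n, survival p R n x := by
      rw [hFsum.tsum_sigma' fun n => .of_finite]
      simp only [hF]

theorem sum_range_survival_le {h : S → ℝ} (hp : ∀ a b, 0 ≤ p a b) (h0 : ∀ x ∉ R, 0 ≤ h x)
    (hh : ∀ x ∉ R, h x = 1 + ∑ k ∈ Rᶜ, p x k * h k) (N : ℕ) {x : S} (hx : x ∉ R) :
    ∑ n ∈ range N, survival p R n x ≤ h x := by
  induction N generalizing x with
  | zero => simpa using h0 x hx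
  | succ N ih =>
    calc ∑ n ∈ range (N + 1), survival p R n x
        = 1 + ∑ k ∈ Rᶜ, p x k * ∑ n ∈ range N, survival p R n k := by
          simp only [sum_range_succ', survival, mul_sum]
          rw [sum_comm, add_comm]
      _ ≤ 1 + ∑ k ∈ Rᶜ, p x k * h k := by
          gcongr with k hk
          · exact hp x k
          · exact ih (mem_compl.1 hk)
      _ = h x := (hh x hx).symm

theorem summable_survival {h : S → ℝ} (hp : ∀ a b, 0 ≤ p a b) (h0 : ∀ x ∉ R, 0 ≤ h x)
    (hh : ∀ x ∉ R, h x = 1 + ∑ k ∈ Rᶜ, p x k * h k) {x : S} (hx : x ∉ R) :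
    Summable fun n => survival p R n x :=
  summable_of_sum_range_le (fun n => survival_nonneg hp n x) fun N =>
    sum_range_survival_le hp h0 hh N hx

theorem tsum_survival_eq (hsum : ∀ y ∉ R, Summable fun n => survival p R n y) {x : S}
    (hx : x ∉ R) : ∑' n, survival p R n x = 1 + ∑ k ∈ Rᶜ, p x k * ∑' n, survival p R n k := by
  rw [(hsum x hx).tsum_eq_zero_add]
  simp only [survival]
  rw [Summable.tsum_finsetSum fun k hk => (hsum k (mem_compl.1 hk)).mul_left (p x k)]
  simp only [tsum_mul_left]

theorem eq_zero_of_harmonic (hp : ∀ a b, 0 ≤ p a b) {d : S → ℝ}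
    (hd : ∀ x ∉ R, d x = ∑ k ∈ Rᶜ, p x k * d k)
    (hlim : ∀ x ∉ R, Tendsto (fun n => survival p R n x) atTop (𝓝 0)) {x : S} (hx : x ∉ R) :
    d x = 0 := by
  set C := ∑ k ∈ Rᶜ, |d k|
  have hbound : ∀ n, ∀ y ∉ R, |d y| ≤ C * survival p R n y := by
    intro n
    induction n with
    | zero =>
      intro y hy
      rw [survival, mul_one]
      exact single_le_sum (f := fun k => |d k|) (fun k _ => abs_nonneg _) (mem_compl.2 hy)
    | succ n ih =>
      intro y hy
      calc |d y| = |∑ k ∈ Rᶜ, p y k * d k| := by rw [← hd y hy]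
        _ ≤ ∑ k ∈ Rᶜ, p y k * |d k| := (abs_sum_le_sum_abs _ _).trans_eq
            (sum_congr rfl fun k _ => by rw [abs_mul, abs_of_nonneg (hp y k)])
        _ ≤ ∑ k ∈ Rᶜ, p y k * (C * survival p R n k) := by
            gcongr with k hk
            · exact hp y k
            · exact ih k (mem_compl.1 hk)
        _ = C * survival p R (n + 1) y := by
            rw [survival, mul_sum]
            exact sum_congr rfl fun k _ => mul_left_comm _ _ _
  have hC : Tendsto (fun n => C * survival p R n x) atTop (𝓝 0) := by
    simpa using (hlim x hx).const_mul C
  exact abs_nonpos_iff.1 (ge_of_tendsto' hC fun n => hbound n x hx)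

theorem meanHit_eq_of_solution {h : S → ℝ} (hp : ∀ a b, 0 ≤ p a b) (h0 : ∀ x ∉ R, 0 ≤ h x)
    (hh : ∀ x ∉ R, h x = 1 + ∑ k ∈ Rᶜ, p x k * h k) {x : S} (hx : x ∉ R) :
    meanHit p R x = h x := by
  have hsum : ∀ y ∉ R, Summable fun n => survival p R n y := fun y hy =>
    summable_survival hp h0 hh hy
  have hdiff : ∑' n, survival p R n x - h x = 0 := by
    refine eq_zero_of_harmonic hp (d := fun y => ∑' n, survival p R n y - h y) (fun y hy => ?_)
      (fun y hy => (hsum y hy).tendsto_atTop_zero) hx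
    rw [tsum_survival_eq hsum hy, hh y hy]
    simp only [mul_sub, sum_sub_distrib]
    ring
  rw [meanHit_eq_tsum_survival hp (hsum x hx)]
  linarith

end Survival

/-- Mean hitting time tree formula: `E_i[T_R] = (∑_{j∉R} w_{ij}(R ∪ {j})) / w(R)`. -/
theorem mean_hitting_time_tree_formula {S : Type*} [Fintype S] [DecidableEq S]
    (p : S → S → ℝ) (hs : IsStochastic p) (R : Finset S) (hw : 0 < w p R)
    (i : S) (hi : i ∉ R) :
    meanHit p R i = (∑ j ∈ Rᶜ, wroot p (insert j R) i j) / w p R := by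
  obtain ⟨hp, hrow⟩ := hs
  refine meanHit_eq_of_solution (h := fun x => (∑ j ∈ Rᶜ, wroot p (insert j R) x j) / w p R) hp
    (fun x _ => div_nonneg (sum_nonneg fun j _ => wroot_nonneg p hp _ x j) hw.le)
    (fun x hx => ?_) hi
  rw [sum_wroot_insert_eq (hrow x) hx, add_div, div_self hw.ne', sum_div]
  simp only [mul_div_assoc]
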